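/- arXiv:2308.10303 — 5 statements merged into one kernel-verified Lean document; each statement's English description precedes it below -/
import Mathlib

section
/- For vectors X, Y in a real inner product space and 1 ≤ p ≤ 2, one has ‖X+Y‖^p - ‖X‖^p ≥ (p(p-1)/2)·‖Y‖²/(‖X‖+‖Y‖)^(2-p) + p‖X‖^(p-2)⟨X,Y⟩, where the middle term is interpreted as 0 when X = Y = 0 and the last term as 0 when X = 0. -/
open RealInnerProductSpace Set

/-!
Write `a = ‖X‖`, `b = ‖Y‖` and `i = ⟪X, Y⟫ ∈ [-ab, ab]`, so that `‖X + Y‖² = a² + 2i + b²`.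
After removing the term linear in `i`, the left-hand side is a concave function of `‖X + Y‖²`
(because `p / 2 ≤ 1`), so it suffices to treat the collinear configurations `i = ±ab`, i.e. `H = ℝ`.
On the line, with `X = a > 0`, `Y = s` and `M = a + |s|`, the function
`x ↦ x ^ p - (p (p - 1) / 2) M ^ (p - 2) x²` is convex on `[0, M]` and its tangent at `a` gives the
bound; it is evaluated at `|a + s| ≥ a + s`, which only helps because the function is increasing
at `a`.
-/

theorem ConvexOn.add_mul_sub_le_of_hasDerivAt {S : Set ℝ} {f : ℝ → ℝ} {f' x y : ℝ}
    (hf : ConvexOn ℝ S f) (hx : x ∈ S) (hy : y ∈ S) (hd : HasDerivAt f f' x) :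
    f x + f' * (y - x) ≤ f y := by
  rcases lt_trichotomy x y with hxy | rfl | hyx
  · have := hf.le_slope_of_hasDerivAt hx hy hxy hd
    rw [slope_def_field, le_div_iff₀ (sub_pos.2 hxy)] at this
    linarith
  · simp
  · have := hf.slope_le_of_hasDerivAt hy hx hyx hd
    rw [slope_def_field, div_le_iff₀ (sub_pos.2 hyx)] at this
    linarith

namespace Real

variable {p : ℝ}

theorem hasDerivAt_rpow_sub_mul_sq {x : ℝ} (hx : x ≠ 0) (K : ℝ) :
    HasDerivAt (fun y ↦ y ^ p - K * y ^ 2) (p * x ^ (p - 1) - 2 * K * x) x :=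
  ((hasDerivAt_rpow_const (Or.inl hx)).fun_sub ((hasDerivAt_pow 2 x).const_mul K)).congr_deriv
    (by ring)

theorem convexOn_rpow_sub_mul_sq (hp1 : 1 ≤ p) (hp2 : p ≤ 2) (M : ℝ) :
    ConvexOn ℝ (Icc 0 M) fun x ↦ x ^ p - p * (p - 1) / 2 * M ^ (p - 2) * x ^ 2 := by
  refine convexOn_of_hasDerivWithinAt2_nonneg (convex_Icc 0 M)
    (f' := fun x ↦ p * x ^ (p - 1) - 2 * (p * (p - 1) / 2 * M ^ (p - 2)) * x)
    (f'' := fun x ↦ p * ((p - 1) * x ^ (p - 2)) - p * (p - 1) * M ^ (p - 2)) ?_ ?_ ?_ ?_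
  · exact ((continuous_rpow_const (by linarith)).sub (by fun_prop)).continuousOn
  all_goals rw [interior_Icc]; rintro x ⟨hx0, hxM⟩
  · exact (hasDerivAt_rpow_sub_mul_sq hx0.ne' _).hasDerivWithinAt
  · have := ((hasDerivAt_rpow_const (p := p - 1) (Or.inl hx0.ne')).const_mul p).fun_sub
      ((hasDerivAt_id x).const_mul (2 * (p * (p - 1) / 2 * M ^ (p - 2))))
    rw [show p - 1 - 1 = p - 2 by ring] at this
    exact (this.congr_deriv (by ring)).hasDerivWithinAt
  · have hM : M ^ (p - 2) ≤ x ^ (p - 2) := rpow_le_rpow_of_nonpos hx0 hxM.le (by linarith)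
    have hc : 0 ≤ p * (p - 1) := mul_nonneg (by linarith) (by linarith)
    nlinarith [mul_le_mul_of_nonneg_left hM hc]

theorem mul_rpow_sub_one_add_le_abs_add_rpow_sub_rpow (hp1 : 1 ≤ p) (hp2 : p ≤ 2) {a s M : ℝ}
    (ha : 0 < a) (hM : a + |s| ≤ M) :
    p * a ^ (p - 1) * s + p * (p - 1) / 2 * M ^ (p - 2) * s ^ 2 ≤ |a + s| ^ p - a ^ p := by
  have hslope : 0 ≤ p * a ^ (p - 1) - 2 * (p * (p - 1) / 2 * M ^ (p - 2)) * a := by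
    have hMa : M ^ (p - 2) ≤ a ^ (p - 2) :=
      rpow_le_rpow_of_nonpos ha (by linarith [abs_nonneg s]) (by linarith)
    have hc : 0 ≤ p * (p - 1) * a := mul_nonneg (mul_nonneg (by linarith) (by linarith)) ha.le
    have hc' : 0 ≤ p * (2 - p) * a * a ^ (p - 2) :=
      mul_nonneg (mul_nonneg (mul_nonneg (by linarith) (by linarith)) ha.le) (rpow_nonneg ha.le _)
    rw [show p - 1 = p - 2 + 1 by ring, rpow_add_one ha.ne']
    nlinarith [mul_le_mul_of_nonneg_left hMa hc]
  have htangent := (convexOn_rpow_sub_mul_sq hp1 hp2 M).add_mul_sub_le_of_hasDerivAt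
    ⟨ha.le, by linarith [abs_nonneg s]⟩
    ⟨abs_nonneg (a + s), by linarith [abs_add_le a s, abs_of_pos ha]⟩
    (hasDerivAt_rpow_sub_mul_sq ha.ne' _)
  simp only [sq_abs] at htangent
  linear_combination htangent +
    mul_le_mul_of_nonneg_left (sub_le_sub_right (le_abs_self (a + s)) a) hslope

theorem sq_rpow_half (x p : ℝ) : (x ^ 2) ^ (p / 2) = |x| ^ p := by
  rw [← sq_abs, ← rpow_natCast, ← rpow_mul (abs_nonneg x)]
  congr 1
  ring

theorem rpow_sub_rpow_ge_of_sq_eq (hp1 : 1 ≤ p) (hp2 : p ≤ 2) {a b r i : ℝ}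
    (ha : 0 < a) (hr : 0 ≤ r) (hi : |i| ≤ a * b) (hr2 : r ^ 2 = a ^ 2 + 2 * i + b ^ 2) :
    p * (p - 1) / 2 * b ^ 2 / (a + b) ^ (2 - p) + p * a ^ (p - 2) * i ≤ r ^ p - a ^ p := by
  have hb : 0 ≤ b := nonneg_of_mul_nonneg_right ((abs_nonneg i).trans hi) ha
  set G : ℝ → ℝ := fun ρ ↦ ρ ^ (p / 2) - p / 2 * a ^ (p - 2) * ρ
  have hG : ConcaveOn ℝ (Ici 0) G :=
    (concaveOn_rpow (by linarith) (by linarith)).sub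
      ((convexOn_id (convex_Ici 0)).smul (by positivity))
  have hGsq (x : ℝ) : G (x ^ 2) = |x| ^ p - p / 2 * a ^ (p - 2) * x ^ 2 := by
    simp only [G, sq_rpow_half]
  have hendpoint (s : ℝ) (hs : |s| = b) :
      a ^ p + p * (p - 1) / 2 * (a + b) ^ (p - 2) * b ^ 2 - p / 2 * a ^ (p - 2) * (a ^ 2 + b ^ 2)
        ≤ G ((a + s) ^ 2) := by
    have h := mul_rpow_sub_one_add_le_abs_add_rpow_sub_rpow hp1 hp2 ha (M := a + b) (by rw [hs])
    have hs2 : s ^ 2 = b ^ 2 := by rw [← sq_abs, hs]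
    have ha1 : a ^ (p - 1) = a ^ (p - 2) * a := by rw [← rpow_add_one ha.ne']; ring_nf
    rw [ha1, hs2] at h
    rw [hGsq]
    linear_combination h + p / 2 * a ^ (p - 2) * hs2
  have hmem : r ^ 2 ∈ segment ℝ ((a - b) ^ 2) ((a + b) ^ 2) := by
    rw [segment_eq_Icc (by nlinarith)]
    constructor <;> nlinarith [abs_le.1 hi]
  have hr' := (le_min (hendpoint (-b) (by simp [hb])) (hendpoint b (abs_of_nonneg hb))).trans
    (hG.ge_on_segment (mem_Ici.2 (sq_nonneg _)) (mem_Ici.2 (sq_nonneg _)) hmem)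
  rw [hGsq, abs_of_nonneg hr, hr2] at hr'
  have hdiv : b ^ 2 / (a + b) ^ (2 - p) = (a + b) ^ (p - 2) * b ^ 2 := by
    rw [div_eq_mul_inv, ← rpow_neg (by positivity), neg_sub, mul_comm]
  rw [mul_div_assoc, hdiv]
  linear_combination hr'

theorem mul_sq_div_rpow_le_rpow (hp1 : 1 ≤ p) (hp2 : p ≤ 2) {b : ℝ} (hb : 0 ≤ b) :
    p * (p - 1) / 2 * b ^ 2 / b ^ (2 - p) ≤ b ^ p := by
  rcases hb.eq_or_lt with rfl | hb
  · simp [rpow_nonneg]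
  rw [mul_div_assoc, ← rpow_natCast, ← rpow_sub hb, show ((2 : ℕ) : ℝ) - (2 - p) = p by ring]
  exact mul_le_of_le_one_left (rpow_nonneg hb.le p) (by nlinarith)

end Real

theorem stmt_1 {H : Type*} [NormedAddCommGroup H] [InnerProductSpace ℝ H]
    (X Y : H) (p : ℝ) (hp1 : 1 ≤ p) (hp2 : p ≤ 2) :
    ‖X + Y‖ ^ p - ‖X‖ ^ p ≥
      (p * (p - 1) / 2) * ‖Y‖ ^ (2 : ℕ) / (‖X‖ + ‖Y‖) ^ (2 - p)
        + p * ‖X‖ ^ (p - 2) * ⟪X, Y⟫ := by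
  rcases (norm_nonneg X).eq_or_lt with hX | hX
  · rw [eq_comm, norm_eq_zero] at hX
    subst hX
    simpa [Real.zero_rpow (by linarith : p ≠ 0)] using
      Real.mul_sq_div_rpow_le_rpow hp1 hp2 (norm_nonneg Y)
  · exact Real.rpow_sub_rpow_ge_of_sq_eq hp1 hp2 hX (norm_nonneg _)
      (abs_real_inner_le_norm X Y) (norm_add_sq_real X Y)
end

section
/- For vectors X, Y in a real inner product space and p ≥ 2, there exists a constant C(p) > 0 (depending only on p) such that ‖X+Y‖^p - ‖X‖^p ≥ C(p)‖Y‖^p + p‖X‖^(p-2)⟨X,Y⟩ for all X, Y. -/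
open RealInnerProductSpace

/-! With `a = ‖X‖`, `b = ‖Y‖`, `t = ⟪X, Y⟫` and `x = ‖X + Y‖`, so that `x² = a² + 2t + b²` and
`|t| ≤ ab`, the inequality with `C = 2⁻ᵖ` becomes a statement about reals. It follows from the
tangent line inequality for the convex function `u ↦ u ^ (p / 2)`: at `u = a²` when `b ≤ 2a`, where
the surplus `(p / 2) a^(p-2) b²` of the tangent absorbs `(b / 2)^p`; and at `u = (b - a)²` when
`b > 2a`, where `x ≥ b - a ≥ b / 2` and `b - a ≥ a` lets the tangent's slope dominate `a^(p-2)`. -/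

namespace Real

lemma rpow_eq_rpow_sub_two_mul_sq {x p : ℝ} (hx : 0 ≤ x) (hp : 2 ≤ p) :
    x ^ p = x ^ (p - 2) * x ^ 2 := by
  simpa using rpow_add_natCast' (y := p - 2) (n := 2) hx (by simp; linarith)

/-- The tangent line inequality for the convex function `u ↦ u ^ (p / 2)` at `u = s ^ 2`. -/
lemma rpow_add_mul_sq_sub_sq_le_rpow {p s x : ℝ} (hp : 2 ≤ p) (hs : 0 < s) (hx : 0 ≤ x) :
    s ^ p + p / 2 * s ^ (p - 2) * (x ^ 2 - s ^ 2) ≤ x ^ p := by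
  have hbernoulli := one_add_mul_self_le_rpow_one_add
    (by nlinarith [sq_nonneg (x / s)] : -1 ≤ (x / s) ^ 2 - 1) (by linarith : 1 ≤ p / 2)
  rw [add_sub_cancel, ← rpow_natCast_mul (div_nonneg hx hs.le), Nat.cast_ofNat,
    mul_div_cancel₀ _ two_ne_zero, div_rpow hx hs.le, le_div_iff₀ (by positivity)] at hbernoulli
  calc s ^ p + p / 2 * s ^ (p - 2) * (x ^ 2 - s ^ 2)
      = (1 + p / 2 * ((x / s) ^ 2 - 1)) * s ^ p := by
        rw [rpow_eq_rpow_sub_two_mul_sq hs.le hp]; field_simp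
    _ ≤ x ^ p := hbernoulli

end Real

open Real

section Scalar

variable {p a b t x : ℝ}

lemma rpow_add_mul_add_half_rpow_le_of_le_two_mul (hp : 2 ≤ p) (ha : 0 < a) (hb : 0 ≤ b)
    (hba : b ≤ 2 * a) (hx : 0 ≤ x) (hx2 : x ^ 2 = a ^ 2 + 2 * t + b ^ 2) :
    a ^ p + p * a ^ (p - 2) * t + (b / 2) ^ p ≤ x ^ p := by
  have htangent := rpow_add_mul_sq_sub_sq_le_rpow hp ha hx
  have hrest : (b / 2) ^ p ≤ p / 2 * a ^ (p - 2) * b ^ 2 :=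
    calc (b / 2) ^ p = (b / 2) ^ (p - 2) * (b / 2) ^ 2 :=
          rpow_eq_rpow_sub_two_mul_sq (by positivity) hp
      _ ≤ a ^ (p - 2) * (b / 2) ^ 2 := by
          gcongr
          linarith
      _ ≤ p / 2 * a ^ (p - 2) * b ^ 2 := by
          nlinarith [mul_nonneg (rpow_nonneg ha.le (p - 2)) (sq_nonneg b)]
  rw [hx2] at htangent
  linarith

lemma rpow_add_mul_add_half_rpow_le_of_two_mul_lt (hp : 2 ≤ p) (ha : 0 ≤ a) (hab : 2 * a < b)
    (ht : -(a * b) ≤ t) (hx : 0 ≤ x) (hx2 : x ^ 2 = a ^ 2 + 2 * t + b ^ 2) :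
    a ^ p + p * a ^ (p - 2) * t + (b / 2) ^ p ≤ x ^ p := by
  have htangent := rpow_add_mul_sq_sub_sq_le_rpow hp (by linarith : 0 < b - a) hx
  have hhalf : (b / 2) ^ p ≤ (b - a) ^ p :=
    rpow_le_rpow (by linarith) (by linarith) (by linarith)
  have hslope : p * a ^ (p - 2) * (t + a * b) ≤ p * (b - a) ^ (p - 2) * (t + a * b) := by
    gcongr
    · linarith
    · linarith
  have hlead : a ^ p ≤ p * a ^ (p - 2) * (a * b) := by
    rw [rpow_eq_rpow_sub_two_mul_sq ha hp]
    have hsq : a ^ 2 ≤ p * (a * b) := by nlinarith [mul_le_mul_of_nonneg_left hab.le ha]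
    nlinarith [rpow_nonneg ha (p - 2)]
  rw [hx2] at htangent
  linarith

lemma rpow_add_mul_add_half_rpow_le (hp : 2 ≤ p) (ha : 0 ≤ a) (hb : 0 ≤ b)
    (ht : |t| ≤ a * b) (hx : 0 ≤ x) (hx2 : x ^ 2 = a ^ 2 + 2 * t + b ^ 2) :
    a ^ p + p * a ^ (p - 2) * t + (b / 2) ^ p ≤ x ^ p := by
  rcases le_or_gt b (2 * a) with hba | hab
  · rcases ha.eq_or_lt with rfl | ha
    · obtain rfl : b = 0 := by linarith
      obtain rfl : t = 0 := by simpa using ht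
      obtain rfl : x = 0 := by simpa using hx2
      simp [zero_rpow (by linarith : p ≠ 0)]
    · exact rpow_add_mul_add_half_rpow_le_of_le_two_mul hp ha hb hba hx hx2
  · exact rpow_add_mul_add_half_rpow_le_of_two_mul_lt hp ha hab (neg_le_of_abs_le ht) hx hx2

end Scalar

theorem stmt_2 (p : ℝ) (hp : 2 ≤ p) :
    ∃ C : ℝ, 0 < C ∧
      ∀ {H : Type} [NormedAddCommGroup H] [InnerProductSpace ℝ H] (X Y : H),
        ‖X + Y‖ ^ p - ‖X‖ ^ p ≥ C * ‖Y‖ ^ p + p * ‖X‖ ^ (p - 2) * ⟪X, Y⟫ := by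
  refine ⟨(2 ^ p)⁻¹, by positivity, fun X Y => ?_⟩
  have key := rpow_add_mul_add_half_rpow_le hp (norm_nonneg X) (norm_nonneg Y)
    (abs_real_inner_le_norm X Y) (norm_nonneg (X + Y)) (norm_add_sq_real X Y)
  rw [div_rpow (norm_nonneg Y) zero_le_two] at key
  rw [inv_mul_eq_div]
  linarith
end

section
/- Let 1 < p < N and let u : ℝᴺ → ℝ be a continuously differentiable function with compact support. Then ∫_{ℝᴺ} ‖∇u(x)‖^p dx ≥ ((N-p)/p)^p ∫_{ℝᴺ} |u(x)|^p / ‖x‖^p dx. -/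
/-!
Regularise the Hardy weight `‖x‖ ^ (-p)` to `w_ε x = (‖x‖ ^ 2 + ε ^ 2) ^ (-p / 2)`. Then
`w_ε ≤ ‖x‖ ^ (-p)` and the vector field `x ↦ w_ε x • x` has divergence at least `(N - p) w_ε`.
Integrating `‖u‖ ^ p` against this divergence by parts, bounding
`|D(‖u‖ ^ p) x| ≤ p ‖u‖ ^ (p - 1) ‖Du‖ ‖x‖` and `‖x‖ w_ε ≤ w_ε ^ (1 - 1/p)`, and applying Hölder
gives `(N - p) I ≤ p I ^ (1 - 1/p) (∫ ‖Du‖ ^ p) ^ (1/p)` for `I = ∫ ‖u‖ ^ p w_ε`, which is the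
inequality with weight `w_ε`. Fatou's lemma lets `ε → 0`.
-/

open MeasureTheory Module Filter Topology

theorem Real.mul_le_rpow_one_sub_inv {r w p : ℝ} (hr : 0 ≤ r) (hw : 0 ≤ w) (hp : 0 < p)
    (h : r ^ p * w ≤ 1) : r * w ≤ w ^ (1 - p⁻¹) :=
  calc r * w = (r ^ p * w) ^ p⁻¹ * w ^ (1 - p⁻¹) := by
        rw [Real.mul_rpow (by positivity) hw, ← Real.rpow_mul hr, mul_inv_cancel₀ hp.ne',
          Real.rpow_one, mul_assoc, ← Real.rpow_add' hw (by simp), add_sub_cancel, Real.rpow_one]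
    _ ≤ w ^ (1 - p⁻¹) :=
        mul_le_of_le_one_left (by positivity) (Real.rpow_le_one (by positivity) h (by positivity))

theorem Real.div_rpow_mul_le_of_mul_le_mul_rpow {p a I L : ℝ} (hp : 0 < p) (ha : 0 < a)
    (hI : 0 ≤ I) (hL : 0 ≤ L) (h : a * I ≤ p * (I ^ (1 - p⁻¹) * L ^ p⁻¹)) :
    (a / p) ^ p * I ≤ L := by
  rcases hI.eq_or_lt with rfl | hI
  · simpa [Real.zero_rpow hp.ne'] using hL
  have h' : a * I ^ p⁻¹ ≤ p * L ^ p⁻¹ := by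
    refine le_of_mul_le_mul_left ?_ (Real.rpow_pos_of_pos hI (1 - p⁻¹))
    calc I ^ (1 - p⁻¹) * (a * I ^ p⁻¹) = a * I := by
          rw [mul_left_comm, ← Real.rpow_add hI, sub_add_cancel, Real.rpow_one]
      _ ≤ p * (I ^ (1 - p⁻¹) * L ^ p⁻¹) := h
      _ = I ^ (1 - p⁻¹) * (p * L ^ p⁻¹) := mul_left_comm _ _ _
  have := Real.rpow_le_rpow (by positivity) h' hp.le
  rw [Real.mul_rpow ha.le (by positivity), Real.mul_rpow hp.le (by positivity),
    ← Real.rpow_mul hI.le, ← Real.rpow_mul hL, inv_mul_cancel₀ hp.ne', Real.rpow_one,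
    Real.rpow_one] at this
  rw [Real.div_rpow ha.le hp.le, div_mul_eq_mul_div, div_le_iff₀ (by positivity)]
  linarith

theorem integral_le_of_ae_tendsto_of_forall_integral_le {α : Type*} [MeasurableSpace α]
    {μ : Measure α} {f : α → ℝ} {g : ℕ → α → ℝ} {C : ℝ} (hg_nonneg : ∀ n x, 0 ≤ g n x)
    (hg : ∀ n, Integrable (g n) μ) (hlim : ∀ᵐ x ∂μ, Tendsto (fun n => g n x) atTop (𝓝 (f x)))
    (hC : ∀ n, ∫ x, g n x ∂μ ≤ C) :
    ∫ x, f x ∂μ ≤ C := by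
  have hf_nonneg : 0 ≤ᵐ[μ] f := hlim.mono fun x hx => ge_of_tendsto' hx fun n => hg_nonneg n x
  have hf_meas : AEStronglyMeasurable f μ :=
    aestronglyMeasurable_of_tendsto_ae _ (fun n => (hg n).aestronglyMeasurable) hlim
  rw [integral_eq_lintegral_of_nonneg_ae hf_nonneg hf_meas]
  refine ENNReal.toReal_le_of_le_ofReal ((integral_nonneg (hg_nonneg 0)).trans (hC 0)) ?_
  calc ∫⁻ x, ENNReal.ofReal (f x) ∂μ = ∫⁻ x, liminf (fun n => ENNReal.ofReal (g n x)) atTop ∂μ :=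
        lintegral_congr_ae <| hlim.mono fun x hx =>
          ((ENNReal.continuous_ofReal.tendsto _).comp hx).liminf_eq.symm
    _ ≤ liminf (fun n => ∫⁻ x, ENNReal.ofReal (g n x) ∂μ) atTop :=
        lintegral_liminf_le' fun n => (hg n).aestronglyMeasurable.aemeasurable.ennreal_ofReal
    _ ≤ ENNReal.ofReal C := by
        refine liminf_le_of_le (by isBoundedDefault) fun b hb => ?_
        obtain ⟨n, hn⟩ := hb.exists
        rw [← ofReal_integral_eq_lintegral_ofReal (hg n) (.of_forall (hg_nonneg n))] at hn
        exact hn.trans (ENNReal.ofReal_le_ofReal (hC n))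

theorem Continuous.integrable_of_forall_notMem_tsupport_eq_zero {X β G : Type*}
    [TopologicalSpace X] [MeasurableSpace X] [OpensMeasurableSpace X] {μ : Measure X}
    [IsFiniteMeasureOnCompacts μ] [Zero β] [NormedAddCommGroup G] {f : X → β} {g : X → G}
    (hg : Continuous g) (hf : HasCompactSupport f) (h0 : ∀ x ∉ tsupport f, g x = 0) :
    Integrable g μ :=
  hg.integrable_of_hasCompactSupport (.intro' hf (isClosed_tsupport f) h0)

theorem HasCompactSupport.norm_rpow {X F : Type*} [TopologicalSpace X] [NormedAddCommGroup F]
    {u : X → F} (hu : HasCompactSupport u) {p : ℝ} (hp : p ≠ 0) :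
    HasCompactSupport fun x => ‖u x‖ ^ p :=
  hu.comp_left (g := fun v : F => ‖v‖ ^ p) (by simp [hp])

theorem neg_fderiv_norm_rpow_mul_le {E F : Type*} [NormedAddCommGroup E] [NormedSpace ℝ E]
    [NormedAddCommGroup F] [InnerProductSpace ℝ F] {p : ℝ} (hp : 1 < p) {u : E → F}
    (hu : Differentiable ℝ u) {x : E} {w : ℝ} (hw : 0 ≤ w) (hxw : ‖x‖ ^ p * w ≤ 1) :
    -(fderiv ℝ (fun x => ‖u x‖ ^ p) x x * w)
      ≤ p * (‖u x‖ ^ (p - 1) * w ^ (1 - p⁻¹) * ‖fderiv ℝ u x‖) :=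
  calc -(fderiv ℝ (fun x => ‖u x‖ ^ p) x x * w)
      ≤ ‖fderiv ℝ (fun x => ‖u x‖ ^ p) x‖ * ‖x‖ * w := by
        rw [neg_le, ← neg_mul]
        exact mul_le_mul_of_nonneg_right
          (neg_le_of_abs_le ((fderiv ℝ (fun x => ‖u x‖ ^ p) x).le_opNorm x)) hw
    _ ≤ p * ‖u x‖ ^ (p - 1) * ‖fderiv ℝ u x‖ * (‖x‖ * w) := by
        rw [mul_assoc]
        exact mul_le_mul_of_nonneg_right (norm_fderiv_norm_rpow_le hu hp) (by positivity)
    _ ≤ p * ‖u x‖ ^ (p - 1) * ‖fderiv ℝ u x‖ * w ^ (1 - p⁻¹) := by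
        gcongr
        exact Real.mul_le_rpow_one_sub_inv (norm_nonneg x) hw (one_pos.trans hp) hxw
    _ = p * (‖u x‖ ^ (p - 1) * w ^ (1 - p⁻¹) * ‖fderiv ℝ u x‖) := by ring

section Integration

variable {E : Type*} [NormedAddCommGroup E] [NormedSpace ℝ E] [MeasurableSpace E]
  [BorelSpace E] (μ : Measure E)

theorem integral_norm_rpow_mul_norm_fderiv_le {F : Type*} [NormedAddCommGroup F]
    [InnerProductSpace ℝ F] [IsFiniteMeasureOnCompacts μ] {p : ℝ} (hp : 1 < p) {w : E → ℝ}
    (hw : Continuous w) (hw_nonneg : ∀ x, 0 ≤ w x) {u : E → F} (hu : ContDiff ℝ 1 u)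
    (hu_supp : HasCompactSupport u) :
    ∫ x, ‖u x‖ ^ (p - 1) * w x ^ (1 - p⁻¹) * ‖fderiv ℝ u x‖ ∂μ
      ≤ (∫ x, ‖u x‖ ^ p * w x ∂μ) ^ (1 - p⁻¹) * (∫ x, ‖fderiv ℝ u x‖ ^ p ∂μ) ^ p⁻¹ := by
  have hpq := Real.HolderConjugate.conjExponent hp
  set q := p.conjExponent
  have hpow : ∀ x, (‖u x‖ ^ (p - 1) * w x ^ (1 - p⁻¹)) ^ q = ‖u x‖ ^ p * w x := fun x => by
    rw [Real.mul_rpow (by positivity) (Real.rpow_nonneg (hw_nonneg x) _),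
      ← Real.rpow_mul (norm_nonneg _), ← Real.rpow_mul (hw_nonneg x), hpq.sub_one_mul_conj,
      hpq.one_sub_inv, inv_mul_cancel₀ hpq.symm.ne_zero, Real.rpow_one]
  have hv : Continuous fun x => ‖u x‖ ^ (p - 1) * w x ^ (1 - p⁻¹) :=
    (hu.continuous.norm.rpow_const fun _ => Or.inr (by linarith)).mul
      (hw.rpow_const fun _ => Or.inr (sub_nonneg.2 (inv_le_one_of_one_le₀ hp.le)))
  have hv_supp : HasCompactSupport fun x => ‖u x‖ ^ (p - 1) * w x ^ (1 - p⁻¹) :=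
    (hu_supp.norm_rpow (sub_ne_zero.2 hp.ne')).mul_right
  have := integral_mul_le_Lp_mul_Lq_of_nonneg (μ := μ) hpq.symm
    (.of_forall fun x => mul_nonneg (by positivity) (Real.rpow_nonneg (hw_nonneg x) _))
    (.of_forall fun x => norm_nonneg (fderiv ℝ u x))
    (hv.memLp_of_hasCompactSupport hv_supp)
    ((hu.continuous_fderiv one_ne_zero).norm.memLp_of_hasCompactSupport (hu_supp.fderiv ℝ).norm)
  simpa only [hpow, one_div, ← hpq.one_sub_inv] using this

variable [FiniteDimensional ℝ E] [μ.IsAddHaarMeasure]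

theorem integral_mul_fderiv_clm_mul_eq_neg {f w : E → ℝ} (hf : ContDiff ℝ 1 f)
    (hf_supp : HasCompactSupport f) (hw : ContDiff ℝ 1 w) (ℓ : E →L[ℝ] ℝ) (v : E) :
    ∫ x, f x * (ℓ v * w x + ℓ x * fderiv ℝ w x v) ∂μ = -∫ x, fderiv ℝ f x v * (ℓ x * w x) ∂μ := by
  have hg : ∀ x, HasFDerivAt (fun y => ℓ y * w y) (ℓ x • fderiv ℝ w x + w x • ℓ) x :=
    fun x => ℓ.hasFDerivAt.mul (hw.differentiable one_ne_zero x).hasFDerivAt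
  have hg_apply : ∀ x, fderiv ℝ (fun y => ℓ y * w y) x v = ℓ v * w x + ℓ x * fderiv ℝ w x v :=
    fun x => by rw [(hg x).fderiv]; simp; ring
  simp_rw [← hg_apply]
  refine integral_mul_fderiv_eq_neg_fderiv_mul_of_integrable ?_ ?_ ?_
    (fun x _ => hf.differentiable one_ne_zero x) (fun x _ => (hg x).differentiableAt)
  · exact (by fun_prop : Continuous _).integrable_of_forall_notMem_tsupport_eq_zero hf_supp
      fun x hx => by simp [fderiv_of_notMem_tsupport ℝ hx]
  · simp_rw [hg_apply]
    exact (by fun_prop : Continuous _).integrable_of_forall_notMem_tsupport_eq_zero hf_supp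
      fun x hx => by simp [image_eq_zero_of_notMem_tsupport hx]
  · exact (by fun_prop : Continuous _).integrable_of_forall_notMem_tsupport_eq_zero hf_supp
      fun x hx => by simp [image_eq_zero_of_notMem_tsupport hx]

/-- `finrank ℝ E * w x + fderiv ℝ w x x` is the divergence of the vector field `x ↦ w x • x`. -/
theorem integral_mul_euler_eq_neg {f w : E → ℝ} (hf : ContDiff ℝ 1 f)
    (hf_supp : HasCompactSupport f) (hw : ContDiff ℝ 1 w) :
    ∫ x, f x * (finrank ℝ E * w x + fderiv ℝ w x x) ∂μ = -∫ x, fderiv ℝ f x x * w x ∂μ := by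
  let b := Module.finBasis ℝ E
  let c : Fin (finrank ℝ E) → E →L[ℝ] ℝ := fun i => LinearMap.toContinuousLinearMap (b.coord i)
  have hc : ∀ i, c i (b i) = 1 := fun i => by simp [c]
  have hdecomp : ∀ (L : E →L[ℝ] ℝ) x, ∑ i, c i x * L (b i) = L x := fun L x => by
    conv_rhs => rw [← b.sum_repr x, map_sum]
    simp only [map_smul, smul_eq_mul, c, LinearMap.coe_toContinuousLinearMap', Basis.coord_apply]
  have hint : ∀ g : E → ℝ, Continuous g → (∀ x ∉ tsupport f, g x = 0) → Integrable g μ :=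
    fun g hg => hg.integrable_of_forall_notMem_tsupport_eq_zero hf_supp
  calc ∫ x, f x * (finrank ℝ E * w x + fderiv ℝ w x x) ∂μ
      = ∑ i, ∫ x, f x * (c i (b i) * w x + c i x * fderiv ℝ w x (b i)) ∂μ := by
        rw [← integral_finsetSum _ fun i _ => hint _ (by fun_prop) fun x hx => by
          simp [image_eq_zero_of_notMem_tsupport hx]]
        simp [hc, ← Finset.mul_sum, Finset.sum_add_distrib, hdecomp]
    _ = -∑ i, ∫ x, fderiv ℝ f x (b i) * (c i x * w x) ∂μ := by
        simp [integral_mul_fderiv_clm_mul_eq_neg μ hf hf_supp hw]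
    _ = -∫ x, fderiv ℝ f x x * w x ∂μ := by
        rw [← integral_finsetSum _ fun i _ => hint _ (by fun_prop) fun x hx => by
          simp [fderiv_of_notMem_tsupport ℝ hx]]
        congr 2 with x
        rw [← hdecomp _ x, Finset.sum_mul]
        exact Finset.sum_congr rfl fun i _ => by ring

theorem weighted_hardy_inequality {F : Type*} [NormedAddCommGroup F] [InnerProductSpace ℝ F]
    {p a : ℝ} (hp : 1 < p) (ha : 0 < a) {w : E → ℝ} (hw : ContDiff ℝ 1 w)
    (hw_nonneg : ∀ x, 0 ≤ w x) (hw_div : ∀ x, a * w x ≤ finrank ℝ E * w x + fderiv ℝ w x x)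
    (hw_le : ∀ x, ‖x‖ ^ p * w x ≤ 1) {u : E → F} (hu : ContDiff ℝ 1 u)
    (hu_supp : HasCompactSupport u) :
    (a / p) ^ p * ∫ x, ‖u x‖ ^ p * w x ∂μ ≤ ∫ x, ‖fderiv ℝ u x‖ ^ p ∂μ := by
  have hp0 : 0 < p := one_pos.trans hp
  set φ := fun x => ‖u x‖ ^ p
  have hφ : ContDiff ℝ 1 φ := (contDiff_norm_rpow hp).comp hu
  have hφ_supp : HasCompactSupport φ := hu_supp.norm_rpow hp0.ne'
  have hint : ∀ g : E → ℝ, Continuous g → (∀ x ∉ tsupport u, g x = 0) → Integrable g μ :=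
    fun g hg => hg.integrable_of_forall_notMem_tsupport_eq_zero hu_supp
  refine Real.div_rpow_mul_le_of_mul_le_mul_rpow hp0 ha
    (integral_nonneg fun x => mul_nonneg (by positivity) (hw_nonneg x))
    (integral_nonneg fun x => by positivity) ?_
  calc a * ∫ x, φ x * w x ∂μ ≤ ∫ x, φ x * (finrank ℝ E * w x + fderiv ℝ w x x) ∂μ := by
        rw [← integral_const_mul]
        refine integral_mono (hint _ (by fun_prop) fun x hx => ?_)
          (hint _ (by fun_prop) fun x hx => ?_) fun x => ?_
        · simp [φ, image_eq_zero_of_notMem_tsupport hx, hp0.ne']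
        · simp [φ, image_eq_zero_of_notMem_tsupport hx, hp0.ne']
        · rw [mul_left_comm]
          exact mul_le_mul_of_nonneg_left (hw_div x) (by positivity)
    _ = -∫ x, fderiv ℝ φ x x * w x ∂μ := integral_mul_euler_eq_neg μ hφ hφ_supp hw
    _ ≤ p * ∫ x, ‖u x‖ ^ (p - 1) * w x ^ (1 - p⁻¹) * ‖fderiv ℝ u x‖ ∂μ := by
        rw [← integral_neg, ← integral_const_mul]
        refine integral_mono (hint _ (by fun_prop) fun x hx => ?_)
          (hint _ ?_ fun x hx => ?_) fun x => ?_
        · have hx' : x ∉ tsupport φ := fun h =>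
            hx (tsupport_comp_subset (g := fun v : F => ‖v‖ ^ p) (by simp [hp0.ne']) u h)
          simp [fderiv_of_notMem_tsupport ℝ hx']
        · exact continuous_const.mul (((hu.continuous.norm.rpow_const fun _ => Or.inr
            (by linarith)).mul (hw.continuous.rpow_const fun _ => Or.inr
            (sub_nonneg.2 (inv_le_one_of_one_le₀ hp.le)))).mul
            (hu.continuous_fderiv one_ne_zero).norm)
        · simp [image_eq_zero_of_notMem_tsupport hx, Real.zero_rpow (sub_ne_zero.2 hp.ne')]
        · exact neg_fderiv_norm_rpow_mul_le hp (hu.differentiable one_ne_zero) (hw_nonneg x)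
            (hw_le x)
    _ ≤ p * ((∫ x, φ x * w x ∂μ) ^ (1 - p⁻¹) * (∫ x, ‖fderiv ℝ u x‖ ^ p ∂μ) ^ p⁻¹) :=
        mul_le_mul_of_nonneg_left (integral_norm_rpow_mul_norm_fderiv_le μ hp hw.continuous
          hw_nonneg hu hu_supp) hp0.le

end Integration

section HardyWeight

variable {E : Type*} [NormedAddCommGroup E] {p ε : ℝ}

noncomputable def hardyWeight (p ε : ℝ) (x : E) : ℝ := (‖x‖ ^ 2 + ε ^ 2) ^ (-(p / 2))

theorem hardyWeight_nonneg (x : E) : 0 ≤ hardyWeight p ε x := by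
  unfold hardyWeight; positivity

theorem norm_rpow_mul_hardyWeight_le_one (hp : 0 ≤ p) (hε : ε ≠ 0) (x : E) :
    ‖x‖ ^ p * hardyWeight p ε x ≤ 1 := by
  have ht : 0 < ‖x‖ ^ 2 + ε ^ 2 := by positivity
  calc ‖x‖ ^ p * hardyWeight p ε x = (‖x‖ ^ 2) ^ (p / 2) * (‖x‖ ^ 2 + ε ^ 2) ^ (-(p / 2)) := by
        rw [hardyWeight, ← Real.rpow_natCast, ← Real.rpow_mul (norm_nonneg x)]
        ring_nf
    _ ≤ (‖x‖ ^ 2 + ε ^ 2) ^ (p / 2) * (‖x‖ ^ 2 + ε ^ 2) ^ (-(p / 2)) := by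
        gcongr
        exact le_add_of_nonneg_right (sq_nonneg ε)
    _ = 1 := by rw [← Real.rpow_add ht, add_neg_cancel, Real.rpow_zero]

theorem tendsto_hardyWeight {x : E} (hx : x ≠ 0) :
    Tendsto (fun ε => hardyWeight p ε x) (𝓝 0) (𝓝 (‖x‖ ^ p)⁻¹) := by
  have hlim : (‖x‖ ^ 2 + (0 : ℝ) ^ 2) ^ (-(p / 2)) = (‖x‖ ^ p)⁻¹ := by
    rw [zero_pow two_ne_zero, add_zero, Real.rpow_neg (by positivity), ← Real.rpow_natCast,
      ← Real.rpow_mul (norm_nonneg x)]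
    ring_nf
  rw [← hlim]
  exact (tendsto_const_nhds.add ((continuous_pow 2).tendsto 0)).rpow_const
    (Or.inl (by simpa using hx))

variable [InnerProductSpace ℝ E]

theorem contDiff_hardyWeight (hε : ε ≠ 0) : ContDiff ℝ 1 (hardyWeight (E := E) p ε) :=
  ((contDiff_norm_sq ℝ).add contDiff_const).rpow_const_of_ne fun _ => by positivity

theorem neg_mul_hardyWeight_le_fderiv (hp : 0 ≤ p) (hε : ε ≠ 0) (x : E) :
    -(p * hardyWeight p ε x) ≤ fderiv ℝ (hardyWeight p ε) x x := by
  set t := ‖x‖ ^ 2 + ε ^ 2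
  have ht : 0 < t := by positivity
  have hderiv := ((hasStrictFDerivAt_norm_sq x).hasFDerivAt.add_const (ε ^ 2)).rpow_const
    (p := -(p / 2)) (Or.inl ht.ne')
  have hsplit : t ^ (-(p / 2)) = t ^ (-(p / 2) - 1) * t := by
    rw [← Real.rpow_add_one ht.ne', sub_add_cancel]
  have ht' : 0 ≤ t ^ (-(p / 2) - 1) := by positivity
  unfold hardyWeight
  rw [hderiv.fderiv]
  simp only [smul_apply, coe_innerSL_apply, real_inner_self_eq_norm_sq, nsmul_eq_mul,
    Nat.cast_ofNat, smul_eq_mul]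
  rw [hsplit]
  nlinarith [mul_nonneg (mul_nonneg hp ht') (sq_nonneg ε)]

end HardyWeight

theorem hardy_inequality {E F : Type*} [NormedAddCommGroup E] [InnerProductSpace ℝ E]
    [FiniteDimensional ℝ E] [MeasurableSpace E] [BorelSpace E] (μ : Measure E)
    [μ.IsAddHaarMeasure] [NormedAddCommGroup F] [InnerProductSpace ℝ F] {p : ℝ} (hp : 1 < p)
    (hpE : p < finrank ℝ E) {u : E → F} (hu : ContDiff ℝ 1 u) (hu_supp : HasCompactSupport u) :
    ((finrank ℝ E - p) / p) ^ p * ∫ x, ‖u x‖ ^ p / ‖x‖ ^ p ∂μ ≤ ∫ x, ‖fderiv ℝ u x‖ ^ p ∂μ := by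
  have hp0 : 0 < p := one_pos.trans hp
  have : Nontrivial E := Module.nontrivial_of_finrank_pos (by exact_mod_cast hp0.trans hpE)
  set c := ((finrank ℝ E - p) / p) ^ p
  set ε : ℕ → ℝ := fun n => 1 / (n + 1)
  have hε : ∀ n, ε n ≠ 0 := fun n => by positivity
  rw [← integral_const_mul]
  refine integral_le_of_ae_tendsto_of_forall_integral_le
    (g := fun n x => c * (‖u x‖ ^ p * hardyWeight p (ε n) x))
    (fun n x => mul_nonneg (by bound) (mul_nonneg (by positivity) (hardyWeight_nonneg x)))
    (fun n => ?_) ?_ (fun n => ?_)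
  · exact Continuous.integrable_of_hasCompactSupport (continuous_const.mul
      (((contDiff_norm_rpow hp).comp hu).continuous.mul (contDiff_hardyWeight (hε n)).continuous))
      (hu_supp.norm_rpow hp0.ne').mul_right.mul_left
  · filter_upwards [compl_mem_ae_iff.2 (measure_singleton (μ := μ) 0)] with x hx
    simp_rw [div_eq_mul_inv]
    exact (((tendsto_hardyWeight hx).comp tendsto_one_div_add_atTop_nhds_zero_nat).const_mul
      _).const_mul c
  · rw [integral_const_mul]
    exact weighted_hardy_inequality μ hp (sub_pos.2 hpE) (contDiff_hardyWeight (hε n))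
      hardyWeight_nonneg (fun x => by linarith [neg_mul_hardyWeight_le_fderiv hp0.le (hε n) x])
      (norm_rpow_mul_hardyWeight_le_one hp0.le (hε n)) hu hu_supp

theorem stmt_4 (N : ℕ) (p : ℝ) (hp : 1 < p) (hpN : p < N)
    (u : EuclideanSpace ℝ (Fin N) → ℝ)
    (hu : ContDiff ℝ 1 u) (hsupp : HasCompactSupport u) :
    ∫ x, ‖gradient u x‖ ^ p ∂volume ≥
      ((N - p) / p) ^ p * ∫ x, |u x| ^ p / ‖x‖ ^ p ∂volume := by
  have h := hardy_inequality volume hp (by simpa using hpN) hu hsupp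
  simp only [finrank_euclideanSpace_fin, Real.norm_eq_abs] at h
  simpa only [gradient, LinearIsometryEquiv.norm_map] using h
end

section
/- Let p = 2 < N and u : ℝᴺ → ℝ be continuously differentiable with compact support. Then ∫_{ℝᴺ} ‖∇u(x)‖² dx ≥ ((N-2)/2)² ∫_{ℝᴺ} u(x)² / ‖x‖² dx. -/
/-!
Integrate by parts against the vector field `V = x / ‖x‖²`, whose divergence is
`(N - 2) / ‖x‖²`: with `λ = (N - 2) / 2`, expanding `0 ≤ ‖∇u + λ u V‖²` and using
`∫ u² div V = -∫ 2 u ⟪∇u, V⟫` leaves `λ² ∫ u² / ‖x‖² ≤ ∫ ‖∇u‖²`. Since `V` is singular at the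
origin, the argument is run with `x / (‖x‖² + ε)`, which gives the same bound for
`λ² ∫ u² / (‖x‖² + ε)`, and then `ε → 0` by dominated convergence.
-/

open MeasureTheory Module Filter Topology

section Divergence

variable {E : Type*} [NormedAddCommGroup E] [NormedSpace ℝ E] [FiniteDimensional ℝ E]
  [MeasurableSpace E] [BorelSpace E] (μ : Measure E) [μ.IsAddHaarMeasure]

theorem integral_mul_trace_fderiv_eq_neg {f : E → ℝ} {V : E → E} (hf : ContDiff ℝ 1 f)
    (hf_supp : HasCompactSupport f) (hV : ContDiff ℝ 1 V) :
    ∫ x, f x * LinearMap.trace ℝ E (fderiv ℝ V x) ∂μ = -∫ x, fderiv ℝ f x (V x) ∂μ := by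
  let b := Module.finBasis ℝ E
  let g : Fin (finrank ℝ E) → E → ℝ := fun i x => b.coord i (V x)
  have hg_fderiv (i) (x) :
      fderiv ℝ (g i) x = (b.coord i).toContinuousLinearMap.comp (fderiv ℝ V x) :=
    ((b.coord i).toContinuousLinearMap.hasFDerivAt.comp x
      ((hV.differentiable one_ne_zero) x).hasFDerivAt).fderiv
  have hf_diff := hf.differentiable one_ne_zero
  have hDf_supp : HasCompactSupport (fderiv ℝ f) := hf_supp.fderiv ℝ
  have hg_diff (i) : Differentiable ℝ (g i) :=
    (b.coord i).toContinuousLinearMap.differentiable.comp (hV.differentiable one_ne_zero)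
  have hg_cont (i) : Continuous (g i) := (hg_diff i).continuous
  have hDf_int (i) : Integrable (fun x => fderiv ℝ f x (b i) * g i x) μ :=
    (((hf.continuous_fderiv one_ne_zero).clm_apply continuous_const).mul
      (hg_cont i)).integrable_of_hasCompactSupport
      (hDf_supp.comp_left (g := fun L : E →L[ℝ] ℝ => L (b i)) rfl).mul_right
  have hDg_int (i) : Integrable (fun x => f x * fderiv ℝ (g i) x (b i)) μ := by
    simp only [hg_fderiv]
    exact (hf.continuous.mul (by fun_prop)).integrable_of_hasCompactSupport hf_supp.mul_right
  have hparts (i) :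
      ∫ x, f x * fderiv ℝ (g i) x (b i) ∂μ = -∫ x, fderiv ℝ f x (b i) * g i x ∂μ :=
    integral_mul_fderiv_eq_neg_fderiv_mul_of_integrable (hDf_int i) (hDg_int i)
      ((hf.continuous.mul (hg_cont i)).integrable_of_hasCompactSupport hf_supp.mul_right)
      (fun x _ => hf_diff x) (fun x _ => hg_diff i x)
  have htrace (x) : LinearMap.trace ℝ E (fderiv ℝ V x) = ∑ i, fderiv ℝ (g i) x (b i) := by
    simp only [hg_fderiv, ContinuousLinearMap.comp_apply, LinearMap.coe_toContinuousLinearMap',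
      Basis.coord_apply]
    rw [LinearMap.trace_eq_matrix_trace ℝ b, Matrix.trace]
    simp [LinearMap.toMatrix_apply]
  have hsum (x) : fderiv ℝ f x (V x) = ∑ i, fderiv ℝ f x (b i) * g i x := by
    conv_lhs => rw [← b.sum_repr (V x)]
    simp only [map_sum, map_smul, smul_eq_mul, g, Basis.coord_apply, mul_comm]
  calc ∫ x, f x * LinearMap.trace ℝ E (fderiv ℝ V x) ∂μ
      = ∑ i, ∫ x, f x * fderiv ℝ (g i) x (b i) ∂μ := by
        simp only [htrace, Finset.mul_sum]
        exact integral_finsetSum _ fun i _ => hDg_int i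
    _ = -∫ x, ∑ i, fderiv ℝ f x (b i) * g i x ∂μ := by
        rw [integral_finsetSum _ fun i _ => hDf_int i, ← Finset.sum_neg_distrib]
        exact Finset.sum_congr rfl fun i _ => hparts i
    _ = -∫ x, fderiv ℝ f x (V x) ∂μ := by simp only [hsum]

end Divergence

theorem integral_div_sq_norm_le_of_forall_pos {E : Type*} [NormedAddCommGroup E]
    [MeasurableSpace E] [OpensMeasurableSpace E] {μ : Measure E} [NullSingletonClass μ]
    {f : E → ℝ} (hf : AEStronglyMeasurable f μ) (hf_nonneg : 0 ≤ f) {C : ℝ}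
    (hC : ∀ ε > 0, ∫ x, f x / (‖x‖ ^ 2 + ε) ∂μ ≤ C) :
    ∫ x, f x / ‖x‖ ^ 2 ∂μ ≤ C := by
  by_cases hint : Integrable (fun x => f x / ‖x‖ ^ 2) μ
  swap
  · rw [integral_undef hint]
    exact (integral_nonneg fun x => div_nonneg (hf_nonneg x) (by positivity)).trans (hC 1 one_pos)
  refine le_of_tendsto (tendsto_integral_filter_of_dominated_convergence (l := 𝓝[>] 0)
    (F := fun ε x => f x / (‖x‖ ^ 2 + ε)) _ ?_ ?_ hint ?_) ?_
  · exact Eventually.of_forall fun ε => hf.div₀ (by fun_prop : Continuous _).aestronglyMeasurable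
  · filter_upwards [self_mem_nhdsWithin] with ε (hε : 0 < ε)
    filter_upwards [Measure.ae_ne μ 0] with x hx
    rw [Real.norm_of_nonneg (div_nonneg (hf_nonneg x) (by positivity))]
    gcongr
    · exact hf_nonneg x
    · linarith
  · filter_upwards [Measure.ae_ne μ 0] with x hx
    have : ContinuousAt (fun ε : ℝ => f x / (‖x‖ ^ 2 + ε)) 0 :=
      continuousAt_const.div (continuousAt_const.add continuousAt_id) (by simpa using hx)
    simpa using this.tendsto.mono_left nhdsWithin_le_nhds
  · filter_upwards [self_mem_nhdsWithin] with ε hε using hC ε hε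

section Hardy

variable {E : Type*} [NormedAddCommGroup E] [InnerProductSpace ℝ E]

theorem neg_two_mul_inner_sub_le_norm_sq (g v : E) (a : ℝ) :
    -(2 * a * inner ℝ g v) - a ^ 2 * ‖v‖ ^ 2 ≤ ‖g‖ ^ 2 := by
  have h := norm_add_sq_real g (a • v)
  rw [real_inner_smul_right, norm_smul, mul_pow, Real.norm_eq_abs, sq_abs] at h
  nlinarith [sq_nonneg ‖g + a • v‖]

theorem integrable_norm_gradient_sq [CompleteSpace E] [MeasurableSpace E] [OpensMeasurableSpace E]
    {μ : Measure E} [IsFiniteMeasureOnCompacts μ] {u : E → ℝ} (hu : ContDiff ℝ 1 u)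
    (hsupp : HasCompactSupport u) : Integrable (fun x => ‖gradient u x‖ ^ 2) μ := by
  have hgrad (x : E) : ‖gradient u x‖ = ‖fderiv ℝ u x‖ := by
    rw [← toDual_gradient, LinearIsometryEquiv.norm_map]
  simp only [hgrad]
  have := hu.continuous_fderiv one_ne_zero
  exact Continuous.integrable_of_hasCompactSupport (by fun_prop)
    ((hsupp.fderiv ℝ).comp_left (g := fun L : E →L[ℝ] ℝ => ‖L‖ ^ 2) (by simp))

noncomputable def hardyField (ε : ℝ) (x : E) : E := (‖x‖ ^ 2 + ε)⁻¹ • x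

theorem hasFDerivAt_hardyField {ε : ℝ} (hε : 0 < ε) (x : E) :
    HasFDerivAt (hardyField ε)
      ((‖x‖ ^ 2 + ε)⁻¹ • ContinuousLinearMap.id ℝ E +
        ((-((‖x‖ ^ 2 + ε) ^ 2)⁻¹) • (2 • innerSL ℝ x)).smulRight x) x := by
  have hq : HasFDerivAt (fun y : E => ‖y‖ ^ 2 + ε) (2 • innerSL ℝ x) x := by
    simpa using (hasFDerivAt_id x).norm_sq.add_const ε
  exact ((hasDerivAt_inv (by positivity)).comp_hasFDerivAt x hq).smul (hasFDerivAt_id x)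

theorem contDiff_hardyField {ε : ℝ} (hε : 0 < ε) {n : WithTop ℕ∞} :
    ContDiff ℝ n (hardyField (E := E) ε) :=
  ((contDiff_norm_sq ℝ).add contDiff_const).inv (fun x => by positivity) |>.smul contDiff_id

theorem trace_fderiv_hardyField [FiniteDimensional ℝ E] {ε : ℝ} (hε : 0 < ε) (x : E) :
    LinearMap.trace ℝ E (fderiv ℝ (hardyField ε) x) =
      finrank ℝ E / (‖x‖ ^ 2 + ε) - 2 * ‖x‖ ^ 2 / (‖x‖ ^ 2 + ε) ^ 2 := by
  rw [(hasFDerivAt_hardyField hε x).fderiv]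
  simp only [neg_smul, ContinuousLinearMap.toLinearMap_add, ContinuousLinearMap.toLinearMap_smul,
    ContinuousLinearMap.coe_id, ContinuousLinearMap.coe_smulRight,
    ContinuousLinearMap.toLinearMap_neg, ContinuousLinearMap.toLinearMap_innerSL_apply, map_add,
    map_smul, LinearMap.trace_id, smul_eq_mul, LinearMap.trace_smulRight, LinearMap.neg_apply,
    LinearMap.smul_apply, innerₛₗ_apply_apply, inner_self_eq_norm_sq_to_K, Real.ringHom_apply,
    nsmul_eq_mul, Nat.cast_ofNat]
  ring

theorem norm_hardyField_sq (ε : ℝ) (x : E) :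
    ‖hardyField ε x‖ ^ 2 = ‖x‖ ^ 2 / (‖x‖ ^ 2 + ε) ^ 2 := by
  rw [hardyField, norm_smul, mul_pow, Real.norm_eq_abs, sq_abs, inv_pow, inv_mul_eq_div]

theorem sq_div_le_trace_fderiv_hardyField [FiniteDimensional ℝ E] (hE : 2 ≤ finrank ℝ E)
    {ε : ℝ} (hε : 0 < ε) (x : E) :
    (((finrank ℝ E : ℝ) - 2) / 2) ^ 2 / (‖x‖ ^ 2 + ε) ≤
      ((finrank ℝ E : ℝ) - 2) / 2 * LinearMap.trace ℝ E (fderiv ℝ (hardyField ε) x) -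
        (((finrank ℝ E : ℝ) - 2) / 2) ^ 2 * ‖hardyField ε x‖ ^ 2 := by
  set lam : ℝ := ((finrank ℝ E : ℝ) - 2) / 2
  have hlam : 0 ≤ lam := by
    have : (2 : ℝ) ≤ finrank ℝ E := by exact_mod_cast hE
    simp only [lam]; linarith
  have hN : (finrank ℝ E : ℝ) = 2 * lam + 2 := by simp only [lam]; ring
  have hq : 0 < ‖x‖ ^ 2 + ε := by positivity
  have hgap : lam * LinearMap.trace ℝ E (fderiv ℝ (hardyField ε) x) -
      lam ^ 2 * ‖hardyField ε x‖ ^ 2 - lam ^ 2 / (‖x‖ ^ 2 + ε) =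
        lam * (lam + 2) * ε / (‖x‖ ^ 2 + ε) ^ 2 := by
    rw [trace_fderiv_hardyField hε, norm_hardyField_sq ε, hN]
    field_simp
    ring
  have : 0 ≤ lam * (lam + 2) * ε / (‖x‖ ^ 2 + ε) ^ 2 := by positivity
  linarith

variable [FiniteDimensional ℝ E] [MeasurableSpace E] [BorelSpace E]
  (μ : Measure E) [μ.IsAddHaarMeasure]

theorem hardy_inequality_regularized (hE : 2 ≤ finrank ℝ E) {u : E → ℝ} (hu : ContDiff ℝ 1 u)
    (hsupp : HasCompactSupport u) {ε : ℝ} (hε : 0 < ε) :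
    (((finrank ℝ E : ℝ) - 2) / 2) ^ 2 * ∫ x, u x ^ 2 / (‖x‖ ^ 2 + ε) ∂μ ≤
      ∫ x, ‖gradient u x‖ ^ 2 ∂μ := by
  set lam : ℝ := ((finrank ℝ E : ℝ) - 2) / 2
  set P : E → ℝ := fun x => u x ^ 2 * LinearMap.trace ℝ E (fderiv ℝ (hardyField ε) x)
  set Q : E → ℝ := fun x => u x ^ 2 * ‖hardyField ε x‖ ^ 2
  set T : E → ℝ := fun x => 2 * u x * fderiv ℝ u x (hardyField ε x)
  have hu_cont := hu.continuous
  have hDu_cont := hu.continuous_fderiv one_ne_zero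
  have hV_cont : Continuous (hardyField (E := E) ε) := (contDiff_hardyField hε (n := 0)).continuous
  have hint_of_vanish (φ : E → ℝ) (hφ : Continuous φ) (h0 : ∀ x, u x = 0 → φ x = 0) :
      Integrable φ μ :=
    hφ.integrable_of_hasCompactSupport
      (hsupp.mono' fun x hx => subset_tsupport u fun hux => hx (h0 x hux))
  have hP_int : Integrable P μ := by
    refine hint_of_vanish P ?_ fun x hx => by simp [P, hx]
    simp only [P, trace_fderiv_hardyField hε]
    fun_prop (disch := intro x; positivity)
  have hQ_int : Integrable Q μ := hint_of_vanish Q (by fun_prop) fun x hx => by simp [Q, hx]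
  have hT_int : Integrable T μ := hint_of_vanish T (by fun_prop) fun x hx => by simp [T, hx]
  have hA_int : Integrable (fun x => u x ^ 2 * (lam ^ 2 / (‖x‖ ^ 2 + ε))) μ :=
    hint_of_vanish _ (by fun_prop (disch := intro x; positivity)) fun x hx => by simp [hx]
  have hparts : ∫ x, P x ∂μ = -∫ x, T x ∂μ := by
    have hDu2 (x : E) (v : E) : fderiv ℝ (fun y => u y ^ 2) x v = 2 * u x * fderiv ℝ u x v := by
      rw [(((hu.differentiable one_ne_zero) x).hasFDerivAt.pow 2).fderiv]
      simp
    simpa only [hDu2] using integral_mul_trace_fderiv_eq_neg μ (hu.pow 2)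
      (hsupp.comp_left (g := fun t : ℝ => t ^ 2) (by simp)) (contDiff_hardyField hε)
  calc lam ^ 2 * ∫ x, u x ^ 2 / (‖x‖ ^ 2 + ε) ∂μ
      = ∫ x, u x ^ 2 * (lam ^ 2 / (‖x‖ ^ 2 + ε)) ∂μ := by
        rw [← integral_const_mul]
        congr 1 with x
        ring
    _ ≤ ∫ x, (lam * P x - lam ^ 2 * Q x) ∂μ :=
        integral_mono hA_int ((hP_int.const_mul _).sub (hQ_int.const_mul _)) fun x =>
          (mul_le_mul_of_nonneg_left (sq_div_le_trace_fderiv_hardyField hE hε x)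
            (sq_nonneg (u x))).trans_eq (by simp only [P, Q]; ring)
    _ = ∫ x, (-lam * T x - lam ^ 2 * Q x) ∂μ := by
        rw [integral_sub (hP_int.const_mul _) (hQ_int.const_mul _),
          integral_sub (hT_int.const_mul _) (hQ_int.const_mul _), integral_const_mul,
          integral_const_mul, integral_const_mul, hparts, mul_neg, neg_mul]
    _ ≤ ∫ x, ‖gradient u x‖ ^ 2 ∂μ :=
        integral_mono ((hT_int.const_mul _).sub (hQ_int.const_mul _))
          (integrable_norm_gradient_sq hu hsupp) fun x =>
          le_of_eq_of_le (by simp only [T, Q, inner_gradient_left]; ring)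
            (neg_two_mul_inner_sub_le_norm_sq (gradient u x) (hardyField ε x) (lam * u x))

theorem hardy_inequality_s5 (hE : 2 ≤ finrank ℝ E) {u : E → ℝ} (hu : ContDiff ℝ 1 u)
    (hsupp : HasCompactSupport u) :
    (((finrank ℝ E : ℝ) - 2) / 2) ^ 2 * ∫ x, u x ^ 2 / ‖x‖ ^ 2 ∂μ ≤
      ∫ x, ‖gradient u x‖ ^ 2 ∂μ := by
  -- makes `μ {0} = 0` available through `NullSingletonClass μ`
  have : Nontrivial E := Module.nontrivial_of_finrank_pos (R := ℝ) (by omega)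
  simp only [← integral_const_mul, ← mul_div_assoc]
  refine integral_div_sq_norm_le_of_forall_pos
    (f := fun x => (((finrank ℝ E : ℝ) - 2) / 2) ^ 2 * u x ^ 2)
    ((hu.continuous.pow 2).const_mul _).aestronglyMeasurable (fun x => by positivity)
    fun ε hε => ?_
  simpa only [integral_const_mul, mul_div_assoc] using
    hardy_inequality_regularized μ hE hu hsupp hε

end Hardy

theorem stmt_5 (N : ℕ) (hN : 2 < N)
    (u : EuclideanSpace ℝ (Fin N) → ℝ)
    (hu : ContDiff ℝ 1 u) (hsupp : HasCompactSupport u) :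
    ∫ x, ‖gradient u x‖ ^ (2 : ℕ) ∂volume ≥
      (((N : ℝ) - 2) / 2) ^ (2 : ℕ) * ∫ x, (u x) ^ (2 : ℕ) / ‖x‖ ^ (2 : ℕ) ∂volume := by
  have h := hardy_inequality_s5 volume (by rw [finrank_euclideanSpace_fin]; exact hN.le) hu hsupp
  rwa [finrank_euclideanSpace_fin] at h
end

section
/- Let N ≥ 2, let B be the open unit ball in ℝᴺ centered at 0, and let u ∈ C_c^1(B \ {0}). Then ∫_B ‖∇u‖^N dx ≥ ((N-1)/N)^N ∫_B |u(x)|^N / (‖x‖^N |log ‖x‖|^N) dx. -/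
/-!
The vector field `V x = x / (‖x‖ ^ N * (-log ‖x‖) ^ (N - 1))` on the punctured unit ball has
divergence `(N - 1) / (‖x‖ * |log ‖x‖|) ^ N`. Integrating `|u| ^ N` against `div V` by parts and
using `|∇ |u| ^ N| ≤ N |u| ^ (N - 1) |∇u|` gives `(N - 1) ∫ B ^ N ≤ N ∫ |∇u| B ^ (N - 1)` for
`B = |u| / (‖x‖ |log ‖x‖|)`. Young's inequality with a suitable weight absorbs the `B`-term on the
right and leaves `((N - 1) / N) ^ N ∫ B ^ N ≤ ∫ |∇u| ^ N`.
-/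

open MeasureTheory Real

theorem young_inequality_pow_succ {a b : ℝ} (ha : 0 ≤ a) (hb : 0 ≤ b) (n : ℕ) :
    (n + 1) * a * b ^ n ≤ a ^ (n + 1) + n * b ^ (n + 1) := by
  rcases hb.eq_or_lt with rfl | hb
  · rcases n with _ | n <;> simp [ha]
  -- Bernoulli's inequality at `1 + t = a / b`
  have h := one_add_mul_le_pow (a := a / b - 1) (by linarith [div_nonneg ha hb.le]) (n + 1)
  rw [add_sub_cancel, div_pow, le_div_iff₀ (by positivity)] at h
  calc (n + 1) * a * b ^ n
      = (1 + ((n + 1 : ℕ) : ℝ) * (a / b - 1)) * b ^ (n + 1) + n * b ^ (n + 1) := by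
        field_simp
        push_cast
        ring
    _ ≤ a ^ (n + 1) + n * b ^ (n + 1) := by gcongr

theorem div_pow_mul_integral_pow_le_integral_pow {α : Type*} [MeasurableSpace α]
    {μ : Measure α} {m : ℕ} {a B : α → ℝ} (ha : ∀ x, 0 ≤ a x) (hB : ∀ x, 0 ≤ B x)
    (haI : Integrable (fun x => a x ^ (m + 1)) μ) (hBI : Integrable (fun x => B x ^ (m + 1)) μ)
    (habI : Integrable (fun x => a x * B x ^ m) μ)
    (h : m * ∫ x, B x ^ (m + 1) ∂μ ≤ (m + 1) * ∫ x, a x * B x ^ m ∂μ) :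
    ((m : ℝ) / (m + 1)) ^ (m + 1) * ∫ x, B x ^ (m + 1) ∂μ ≤ ∫ x, a x ^ (m + 1) ∂μ := by
  set c : ℝ := m / (m + 1)
  have hc : 0 ≤ c := by positivity
  -- Young's inequality for `a` and `c * B`; this `c` makes the `B`-terms cancel against `h`
  have hyoung : (m + 1) * c ^ m * ∫ x, a x * B x ^ m ∂μ ≤
      ∫ x, a x ^ (m + 1) ∂μ + m * c ^ (m + 1) * ∫ x, B x ^ (m + 1) ∂μ := by
    rw [← integral_const_mul, ← integral_const_mul, ← integral_add haI (hBI.const_mul _)]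
    refine integral_mono (habI.const_mul _) (haI.add (hBI.const_mul _)) fun x => ?_
    have := young_inequality_pow_succ (ha x) (mul_nonneg hc (hB x)) m
    simp only [mul_pow] at this
    linarith
  have hc1 : c ^ (m + 1) = c ^ m * m - m * c ^ (m + 1) := by
    simp only [c, pow_succ]
    field_simp
    ring
  calc c ^ (m + 1) * ∫ x, B x ^ (m + 1) ∂μ
      = c ^ m * (m * ∫ x, B x ^ (m + 1) ∂μ) - m * c ^ (m + 1) * ∫ x, B x ^ (m + 1) ∂μ := by
        linear_combination (∫ x, B x ^ (m + 1) ∂μ) * hc1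
    _ ≤ c ^ m * ((m + 1) * ∫ x, a x * B x ^ m ∂μ) - m * c ^ (m + 1) * ∫ x, B x ^ (m + 1) ∂μ := by
        gcongr
    _ ≤ ∫ x, a x ^ (m + 1) ∂μ := by linarith

theorem Continuous.mul_continuousOn_of_tsupport_subset {X : Type*} [TopologicalSpace X]
    {U : Set X} {k h : X → ℝ} (hk : Continuous k) (hh : ContinuousOn h U) (hU : IsOpen U)
    (hkU : tsupport k ⊆ U) : Continuous fun x => k x * h x :=
  (hk.continuousOn.mul hh).continuous_of_tsupport_subset hU (tsupport_mul_subset_left.trans hkU)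

theorem HasCompactSupport.integrable_mul_of_continuousOn {X : Type*} [TopologicalSpace X]
    [MeasurableSpace X] [OpensMeasurableSpace X] {μ : Measure X} [IsFiniteMeasureOnCompacts μ]
    {U : Set X} {k h : X → ℝ} (hkc : HasCompactSupport k) (hk : Continuous k)
    (hh : ContinuousOn h U) (hU : IsOpen U) (hkU : tsupport k ⊆ U) :
    Integrable (fun x => k x * h x) μ :=
  (hk.mul_continuousOn_of_tsupport_subset hh hU hkU).integrable_of_hasCompactSupport hkc.mul_right

theorem norm_gradient {E : Type*} [NormedAddCommGroup E] [InnerProductSpace ℝ E]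
    [CompleteSpace E] (f : E → ℝ) (x : E) : ‖gradient f x‖ = ‖fderiv ℝ f x‖ :=
  (InnerProductSpace.toDual ℝ E).symm.norm_map _

section Divergence

variable {E : Type*} [NormedAddCommGroup E] [InnerProductSpace ℝ E]

noncomputable def divergence (V : E → E) (x : E) : ℝ :=
  LinearMap.trace ℝ E (fderiv ℝ V x)

theorem divergence_eq_sum_fderiv_inner {V : E → E} {x : E} (hV : DifferentiableAt ℝ V x)
    {ι : Type*} [Fintype ι] (b : OrthonormalBasis ι ℝ E) :
    divergence V x = ∑ i, fderiv ℝ (fun y => inner ℝ (b i) (V y)) x (b i) := by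
  rw [divergence, LinearMap.trace_eq_sum_inner _ b]
  refine Finset.sum_congr rfl fun i _ => ?_
  rw [show (fun y => inner ℝ (b i) (V y)) = innerSL ℝ (b i) ∘ V from rfl,
    ((innerSL ℝ (b i)).hasFDerivAt.comp x hV.hasFDerivAt).fderiv]
  rfl

theorem divergence_smul [FiniteDimensional ℝ E] {f : E → ℝ} {V : E → E} {x : E}
    (hf : DifferentiableAt ℝ f x) (hV : DifferentiableAt ℝ V x) :
    divergence (fun y => f y • V y) x = fderiv ℝ f x (V x) + f x * divergence V x := by
  rw [divergence, divergence, fderiv_fun_smul hf hV, ContinuousLinearMap.toLinearMap_add,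
    ContinuousLinearMap.toLinearMap_smul, ContinuousLinearMap.coe_smulRight, map_add, map_smul,
    LinearMap.trace_smulRight, smul_eq_mul, add_comm]
  rfl

theorem divergence_fun_id [FiniteDimensional ℝ E] (x : E) :
    divergence (fun y : E => y) x = Module.finrank ℝ E := by
  rw [divergence, fderiv_fun_id, ContinuousLinearMap.coe_id, LinearMap.trace_id]

theorem divergence_smul_self_of_hasDerivAt [FiniteDimensional ℝ E] {φ : ℝ → ℝ} {φ' : ℝ} {x : E}
    (hx : x ≠ 0) (hφ : HasDerivAt φ φ' ‖x‖) :
    divergence (fun y => φ ‖y‖ • y) x = Module.finrank ℝ E * φ ‖x‖ + ‖x‖ * φ' := by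
  have hnorm : DifferentiableAt ℝ (‖·‖) x := (contDiffAt_norm ℝ hx).differentiableAt one_ne_zero
  have hφnorm : HasFDerivAt (fun y => φ ‖y‖) (φ' • fderiv ℝ (‖·‖) x) x :=
    hφ.comp_hasFDerivAt x hnorm.hasFDerivAt
  rw [divergence_smul hφnorm.differentiableAt differentiableAt_fun_id, hφnorm.fderiv,
    smul_apply, hnorm.fderiv_norm_self, divergence_fun_id, smul_eq_mul]
  ring

variable [FiniteDimensional ℝ E] [MeasurableSpace E] [BorelSpace E] {μ : Measure E}
  [μ.IsAddHaarMeasure]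

theorem integral_mul_divergence_eq_neg_integral_fderiv {U : Set E} (hU : IsOpen U)
    {f : E → ℝ} {V : E → E} (hf : ContDiff ℝ 1 f) (hfc : HasCompactSupport f)
    (hfU : tsupport f ⊆ U) (hV : ContDiffOn ℝ 1 V U) :
    ∫ x, f x * divergence V x ∂μ = -∫ x, fderiv ℝ f x (V x) ∂μ := by
  let b := stdOrthonormalBasis ℝ E
  let g i y := inner ℝ (b i) (V y)
  have hg i : ContDiffOn ℝ 1 (g i) U := (innerSL ℝ (b i)).contDiff.comp_contDiffOn hV
  have hgd i : ∀ x ∈ U, DifferentiableAt ℝ (g i) x := fun x hx =>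
    ((hg i).differentiableOn one_ne_zero x hx).differentiableAt (hU.mem_nhds hx)
  have hint i : Integrable (fun x => f x * fderiv ℝ (g i) x (b i)) μ :=
    hfc.integrable_mul_of_continuousOn hf.continuous
      (((hg i).continuousOn_fderiv_of_isOpen hU le_rfl).clm_apply continuousOn_const) hU hfU
  have hint' i : Integrable (fun x => fderiv ℝ f x (b i) * g i x) μ :=
    (hfc.fderiv_apply ℝ (b i)).integrable_mul_of_continuousOn
      ((hf.continuous_fderiv one_ne_zero).clm_apply continuous_const) (hg i).continuousOn hU
      ((tsupport_fderiv_apply_subset ℝ (b i)).trans hfU)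
  have ibp i : ∫ x, f x * fderiv ℝ (g i) x (b i) ∂μ = -∫ x, fderiv ℝ f x (b i) * g i x ∂μ :=
    integral_mul_fderiv_eq_neg_fderiv_mul_of_integrable (hint' i) (hint i)
      (hfc.integrable_mul_of_continuousOn hf.continuous (hg i).continuousOn hU hfU)
      (fun x _ => hf.differentiable one_ne_zero x) (fun x hx => hgd i x (hfU hx))
  have hdiv x : f x * divergence V x = ∑ i, f x * fderiv ℝ (g i) x (b i) := by
    by_cases hx : x ∈ U
    · rw [divergence_eq_sum_fderiv_inner
        ((hV.differentiableOn one_ne_zero x hx).differentiableAt (hU.mem_nhds hx)) b,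
        Finset.mul_sum]
    · simp [image_eq_zero_of_notMem_tsupport fun h => hx (hfU h)]
  have hfV x : fderiv ℝ f x (V x) = ∑ i, fderiv ℝ f x (b i) * g i x := by
    conv_lhs => rw [← b.sum_repr' (V x)]
    simp [g, map_sum, mul_comm]
  simp_rw [hdiv, hfV]
  rw [integral_finsetSum _ fun i _ => hint i, integral_finsetSum _ fun i _ => hint' i,
    ← Finset.sum_neg_distrib]
  exact Finset.sum_congr rfl fun i _ => ibp i

end Divergence

section CriticalHardy

-- In dimension `N = m + 1`, `criticalHardyProfile m ‖x‖ • x = x / (‖x‖ ^ N * (-log ‖x‖) ^ m)`.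
noncomputable def criticalHardyProfile (m : ℕ) (r : ℝ) : ℝ :=
  ((r * -log r) ^ m * r)⁻¹

theorem hasDerivAt_criticalHardyProfile (m : ℕ) {r : ℝ} (h0 : 0 < r) (h1 : r < 1) :
    HasDerivAt (criticalHardyProfile m)
      (-(m * (-log r - 1) + -log r) / (r * (r * -log r) ^ (m + 1))) r := by
  have hL : 0 < -log r := neg_pos.mpr (log_neg h0 h1)
  have hrL : HasDerivAt (fun s => s * -log s) (-log r - 1) r :=
    ((hasDerivAt_id' r).fun_mul (hasDerivAt_log h0.ne').neg).congr_deriv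
      (by simp [h0.ne']; ring)
  refine (((hrL.fun_pow m).fun_mul (hasDerivAt_id' r)).inv (by positivity)).congr_deriv ?_
  have hlog : log r ≠ 0 := (log_neg h0 h1).ne
  rcases m with _ | m
  · field_simp
    simp
  · simp only [pow_succ, add_tsub_cancel_right]
    field_simp

theorem contDiffAt_criticalHardyProfile (m : ℕ) {r : ℝ} (h0 : 0 < r) (h1 : r < 1) :
    ContDiffAt ℝ 1 (criticalHardyProfile m) r := by
  have hL : 0 < -log r := neg_pos.mpr (log_neg h0 h1)
  exact (((contDiffAt_id.mul (contDiffAt_log.2 h0.ne').neg).pow m).mul contDiffAt_id).inv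
    (by simp only [id]; positivity)

variable {E : Type*} [NormedAddCommGroup E]

theorem norm_pos_and_lt_one_of_mem_ball_diff {x : E} (hx : x ∈ Metric.ball 0 1 \ {0}) :
    0 < ‖x‖ ∧ ‖x‖ < 1 :=
  ⟨norm_pos_iff.mpr hx.2, mem_ball_zero_iff.mp hx.1⟩

variable [InnerProductSpace ℝ E]

noncomputable def criticalHardyField (m : ℕ) (x : E) : E :=
  criticalHardyProfile m ‖x‖ • x

theorem contDiffOn_criticalHardyField (m : ℕ) :
    ContDiffOn ℝ 1 (criticalHardyField m) (Metric.ball (0 : E) 1 \ {0}) := fun x hx =>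
  have ⟨h0, h1⟩ := norm_pos_and_lt_one_of_mem_ball_diff hx
  (((contDiffAt_criticalHardyProfile m h0 h1).comp x (contDiffAt_norm ℝ hx.2)).smul
    contDiffAt_id).contDiffWithinAt

theorem norm_criticalHardyField (m : ℕ) {x : E} (hx : x ∈ Metric.ball 0 1 \ {0}) :
    ‖criticalHardyField m x‖ = ((‖x‖ * -log ‖x‖) ^ m)⁻¹ := by
  obtain ⟨h0, h1⟩ := norm_pos_and_lt_one_of_mem_ball_diff hx
  have hL : 0 < -log ‖x‖ := neg_pos.mpr (log_neg h0 h1)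
  rw [criticalHardyField, norm_smul, criticalHardyProfile, norm_inv, norm_mul, norm_norm,
    norm_of_nonneg (by positivity)]
  field_simp

theorem divergence_criticalHardyField [FiniteDimensional ℝ E] {m : ℕ}
    (hE : Module.finrank ℝ E = m + 1) {x : E} (hx : x ∈ Metric.ball 0 1 \ {0}) :
    divergence (criticalHardyField m) x = m * ((‖x‖ * -log ‖x‖) ^ (m + 1))⁻¹ := by
  obtain ⟨h0, h1⟩ := norm_pos_and_lt_one_of_mem_ball_diff hx
  have hL : 0 < -log ‖x‖ := neg_pos.mpr (log_neg h0 h1)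
  rw [show criticalHardyField m = fun y : E => criticalHardyProfile m ‖y‖ • y from rfl,
    divergence_smul_self_of_hasDerivAt hx.2
    (hasDerivAt_criticalHardyProfile m h0 h1), hE, criticalHardyProfile]
  generalize -log ‖x‖ = L at hL ⊢
  push_cast
  field_simp
  ring

end CriticalHardy

section Hardy

variable {E : Type*} [NormedAddCommGroup E]

noncomputable def logHardyQuotient (u : E → ℝ) (x : E) : ℝ :=
  |u x| / (‖x‖ * |log ‖x‖|)

theorem continuous_logHardyQuotient {u : E → ℝ} (hu : Continuous u)
    (hsupp : tsupport u ⊆ Metric.ball 0 1 \ {0}) : Continuous (logHardyQuotient u) := by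
  have hw : ContinuousOn (fun x : E => (‖x‖ * |log ‖x‖|)⁻¹) (Metric.ball 0 1 \ {0}) := by
    refine ContinuousOn.inv₀ (continuous_norm.continuousOn.mul ?_) fun x hx => ?_
    · exact (continuousOn_log.comp continuous_norm.continuousOn
        fun x hx => norm_ne_zero_iff.mpr hx.2).abs
    · obtain ⟨h0, h1⟩ := norm_pos_and_lt_one_of_mem_ball_diff hx
      exact mul_ne_zero h0.ne' (abs_pos.mpr (log_neg h0 h1).ne).ne'
  exact hu.abs.mul_continuousOn_of_tsupport_subset hw
    (Metric.isOpen_ball.sdiff isClosed_singleton) ((tsupport_comp_subset abs_zero u).trans hsupp)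

theorem HasCompactSupport.logHardyQuotient {u : E → ℝ} (hc : HasCompactSupport u) :
    HasCompactSupport (logHardyQuotient u) :=
  hc.mono fun x hx h => hx (by simp [_root_.logHardyQuotient, h])

variable [InnerProductSpace ℝ E]

theorem norm_rpow_mul_divergence_criticalHardyField [FiniteDimensional ℝ E] {m : ℕ}
    (hE : Module.finrank ℝ E = m + 1) {u : E → ℝ} (hsupp : tsupport u ⊆ Metric.ball 0 1 \ {0})
    (x : E) :
    ‖u x‖ ^ ((m : ℝ) + 1) * divergence (criticalHardyField m) x =
      m * logHardyQuotient u x ^ (m + 1) := by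
  rw [show (m : ℝ) + 1 = ((m + 1 : ℕ) : ℝ) by push_cast; rfl, rpow_natCast, norm_eq_abs]
  by_cases hx : x ∈ Metric.ball 0 1 \ {0}
  · obtain ⟨h0, h1⟩ := norm_pos_and_lt_one_of_mem_ball_diff hx
    rw [divergence_criticalHardyField hE hx, _root_.logHardyQuotient, div_pow,
      abs_of_neg (log_neg h0 h1)]
    ring
  · simp [_root_.logHardyQuotient, image_eq_zero_of_notMem_tsupport fun h => hx (hsupp h)]

theorem abs_fderiv_norm_rpow_apply_criticalHardyField_le {m : ℕ} (hm : 0 < m) {u : E → ℝ}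
    (hu : Differentiable ℝ u) (hsupp : tsupport u ⊆ Metric.ball 0 1 \ {0}) (x : E) :
    |fderiv ℝ (fun y => ‖u y‖ ^ ((m : ℝ) + 1)) x (criticalHardyField m x)| ≤
      (m + 1) * (‖fderiv ℝ u x‖ * logHardyQuotient u x ^ m) :=
  calc _ ≤ ‖fderiv ℝ (fun y => ‖u y‖ ^ ((m : ℝ) + 1)) x‖ * ‖criticalHardyField m x‖ :=
        ContinuousLinearMap.le_opNorm _ _
    _ ≤ (m + 1) * ‖u x‖ ^ ((m : ℝ) + 1 - 1) * ‖fderiv ℝ u x‖ * ‖criticalHardyField m x‖ := by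
        gcongr
        exact norm_fderiv_norm_rpow_le hu (by norm_cast; omega)
    _ = (m + 1) * (‖fderiv ℝ u x‖ * logHardyQuotient u x ^ m) := by
        rw [add_sub_cancel_right, rpow_natCast]
        by_cases hx : x ∈ Metric.ball 0 1 \ {0}
        · obtain ⟨h0, h1⟩ := norm_pos_and_lt_one_of_mem_ball_diff hx
          rw [norm_criticalHardyField m hx, _root_.logHardyQuotient, div_pow,
            abs_of_neg (log_neg h0 h1), norm_eq_abs]
          ring
        · simp [_root_.logHardyQuotient, image_eq_zero_of_notMem_tsupport fun h => hx (hsupp h),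
            hm.ne']

variable [FiniteDimensional ℝ E] [MeasurableSpace E] [BorelSpace E] (μ : Measure E)
  [μ.IsAddHaarMeasure]

theorem mul_integral_logHardyQuotient_pow_le {m : ℕ} (hm : 0 < m)
    (hE : Module.finrank ℝ E = m + 1) {u : E → ℝ} (hu : ContDiff ℝ 1 u)
    (hc : HasCompactSupport u) (hsupp : tsupport u ⊆ Metric.ball 0 1 \ {0}) :
    m * ∫ x, logHardyQuotient u x ^ (m + 1) ∂μ ≤
      (m + 1) * ∫ x, ‖fderiv ℝ u x‖ * logHardyQuotient u x ^ m ∂μ := by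
  set B := logHardyQuotient u
  set V : E → E := criticalHardyField m
  set g : ℝ → ℝ := fun t => ‖t‖ ^ ((m : ℝ) + 1)
  have hg0 : g 0 = 0 := by simp [g, zero_rpow (by positivity : (m : ℝ) + 1 ≠ 0)]
  have hBI : Integrable (fun x => ‖fderiv ℝ u x‖ * B x ^ m) μ :=
    ((hu.continuous_fderiv one_ne_zero).norm.mul
      ((continuous_logHardyQuotient hu.continuous hsupp).pow m)).integrable_of_hasCompactSupport
      (hc.fderiv ℝ).norm.mul_right
  calc m * ∫ x, B x ^ (m + 1) ∂μ = ∫ x, (g ∘ u) x * divergence V x ∂μ := by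
        rw [← integral_const_mul]
        exact integral_congr_ae (.of_forall fun x =>
          (norm_rpow_mul_divergence_criticalHardyField hE hsupp x).symm)
    _ = -∫ x, fderiv ℝ (g ∘ u) x (V x) ∂μ :=
        integral_mul_divergence_eq_neg_integral_fderiv
          (Metric.isOpen_ball.sdiff isClosed_singleton)
          ((contDiff_norm_rpow (by norm_cast; omega)).comp hu) (hc.comp_left hg0)
          ((tsupport_comp_subset hg0 u).trans hsupp) (contDiffOn_criticalHardyField m)
    _ ≤ ∫ x, |fderiv ℝ (g ∘ u) x (V x)| ∂μ := (neg_le_abs _).trans abs_integral_le_integral_abs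
    _ ≤ ∫ x, (m + 1) * (‖fderiv ℝ u x‖ * B x ^ m) ∂μ :=
        integral_mono_of_nonneg (.of_forall fun x => abs_nonneg _) (hBI.const_mul _)
          (.of_forall (abs_fderiv_norm_rpow_apply_criticalHardyField_le hm
            (hu.differentiable one_ne_zero) hsupp))
    _ = (m + 1) * ∫ x, ‖fderiv ℝ u x‖ * B x ^ m ∂μ := integral_const_mul _ _

theorem critical_hardy_inequality {m : ℕ} (hm : 0 < m) (hE : Module.finrank ℝ E = m + 1)
    {u : E → ℝ} (hu : ContDiff ℝ 1 u) (hc : HasCompactSupport u)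
    (hsupp : tsupport u ⊆ Metric.ball 0 1 \ {0}) :
    ((m : ℝ) / (m + 1)) ^ (m + 1) * ∫ x, logHardyQuotient u x ^ (m + 1) ∂μ ≤
      ∫ x, ‖fderiv ℝ u x‖ ^ (m + 1) ∂μ := by
  have hB := continuous_logHardyQuotient hu.continuous hsupp
  have hBc := hc.logHardyQuotient
  have hDu := (hu.continuous_fderiv one_ne_zero).norm
  have hDuc : HasCompactSupport fun x => ‖fderiv ℝ u x‖ := (hc.fderiv ℝ).norm
  exact div_pow_mul_integral_pow_le_integral_pow (fun x => norm_nonneg _)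
    (fun x => div_nonneg (abs_nonneg _) (by positivity))
    ((hDu.pow _).integrable_of_hasCompactSupport (hDuc.comp_left (g := (· ^ (m + 1))) (by simp)))
    ((hB.pow _).integrable_of_hasCompactSupport (hBc.comp_left (g := (· ^ (m + 1))) (by simp)))
    ((hDu.mul (hB.pow _)).integrable_of_hasCompactSupport hDuc.mul_right)
    (mul_integral_logHardyQuotient_pow_le μ hm hE hu hc hsupp)

end Hardy

theorem stmt_10 (N : ℕ) (hN : 2 ≤ N)
    (u : EuclideanSpace ℝ (Fin N) → ℝ)
    (hu : ContDiff ℝ 1 u) (hsupp : HasCompactSupport u)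
    (hΩu : tsupport u ⊆ Metric.ball (0 : EuclideanSpace ℝ (Fin N)) 1 \ {0}) :
    ∫ x in Metric.ball (0 : EuclideanSpace ℝ (Fin N)) 1, ‖gradient u x‖ ^ N ∂volume ≥
      (((N : ℝ) - 1) / N) ^ N *
        ∫ x in Metric.ball (0 : EuclideanSpace ℝ (Fin N)) 1,
          |u x| ^ N / (‖x‖ ^ N * |Real.log ‖x‖| ^ N) ∂volume := by
  obtain ⟨m, rfl⟩ : ∃ m, N = m + 1 := ⟨N - 1, by omega⟩
  have hout {x} (hx : x ∉ Metric.ball 0 1) : x ∉ tsupport u := fun h => hx (hΩu h).1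
  rw [setIntegral_eq_integral_of_forall_compl_eq_zero fun x hx => by
      simp [norm_gradient, fderiv_of_notMem_tsupport ℝ (hout hx)],
    setIntegral_eq_integral_of_forall_compl_eq_zero fun x hx => by
      simp [image_eq_zero_of_notMem_tsupport (hout hx)],
    ge_iff_le, Nat.cast_succ, add_sub_cancel_right]
  simp only [norm_gradient]
  simpa only [logHardyQuotient, div_pow, mul_pow] using
    critical_hardy_inequality volume (by omega) finrank_euclideanSpace_fin hu hsupp hΩu
end
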